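/- For every k ≥ 0, the minimal DFA recognizing the language L(A_k) has depth 2^{k+1} − 1, where A_k is the NFA with states {0, 1, …, k}, alphabet {a_0, a_1, …, a_k}, all states initial, accepting state 0, and transitions: i·a_j = {i} whenever k ≥ i > j ≥ 0, and i·a_i = {0, 1, …, i−1} whenever k ≥ i ≥ 1 (no other transitions). -/

import Mathlib

/-- `subk k w` is the set of scattered subwords of `w` of length at most `k`. -/
def subk {α : Type*} (k : ℕ) (w : List α) : Set (List α) :=
  {u | u.length ≤ k ∧ u.Sublist w}

/-- Two words are `k`-equivalent if they have the same subwords of length at most `k`. -/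
def kEquiv {α : Type*} (k : ℕ) (u v : List α) : Prop :=
  subk k u = subk k v

/-- A language is `k`-piecewise testable (Simon's characterization):
`k`-equivalent words are equi-members. -/
def IsPT {α : Type*} (k : ℕ) (L : Language α) : Prop :=
  ∀ u v : List α, kEquiv k u v → (u ∈ L ↔ v ∈ L)

/-- A DFA is minimal if all states are reachable and pairwise distinguishable. -/
def IsMinimalDFA {α σ : Type*} (A : DFA α σ) : Prop :=
  (∀ q : σ, ∃ w : List α, A.eval w = q) ∧
  ∀ p q : σ,
    (∀ w : List α, (A.evalFrom p w ∈ A.accept ↔ A.evalFrom q w ∈ A.accept)) → p = q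

/-- There is a simple path (pairwise distinct states) with `m` transitions in the DFA `A`. -/
def DFAHasSimplePath {α σ : Type*} (A : DFA α σ) (m : ℕ) : Prop :=
  ∃ (qs : Fin (m + 1) → σ) (as : Fin m → α),
    Function.Injective qs ∧ ∀ i : Fin m, A.step (qs i.castSucc) (as i) = qs i.succ

/-- The depth of a DFA: the number of transitions on a longest simple path. -/
noncomputable def dfaDepth {α σ : Type*} (A : DFA α σ) : ℕ :=
  sSup {m | DFAHasSimplePath A m}

/-- There is a simple path (pairwise distinct states) with `m` transitions in the NFA `A`. -/
def NFAHasSimplePath {α σ : Type*} (A : NFA α σ) (m : ℕ) : Prop :=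
  ∃ (qs : Fin (m + 1) → σ) (as : Fin m → α),
    Function.Injective qs ∧ ∀ i : Fin m, qs i.succ ∈ A.step (qs i.castSucc) (as i)

/-- The depth of an NFA: the number of transitions on a longest simple path. -/
noncomputable def nfaDepth {α σ : Type*} (A : NFA α σ) : ℕ :=
  sSup {m | NFAHasSimplePath A m}

/-- The NFA `A_k`: states `{0,…,k}`, alphabet `{a_0,…,a_k}` (both modeled by
`Fin (k+1)`), all states initial, accepting state `0`, with `i·a_j = {i}` for
`i > j` and `i·a_i = {0,…,i-1}` for `i ≥ 1` (no other transitions). -/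
def Ak (k : ℕ) : NFA (Fin (k + 1)) (Fin (k + 1)) where
  step := fun q a =>
    if a < q then {q} else if q = a ∧ 0 < q then {p | p < q} else ∅
  start := Set.univ
  accept := {0}

/-!
Identify a set `S ⊆ {0, …, k}` with the number `v = ∑_{q ∈ S} 2 ^ q`. If `v = 2 ^ j * (2 * m + 1)`,
the letter `a_j` keeps the elements of `S` above `j`, removes `j` and adds every state below `j`:
it maps the set of `v` to the set of `v - 1`. So in the subset automaton of `A_k`, counting down
from `{0, …, k}` to `∅` is a simple path through all `2 ^ (k + 1)` states, which are therefore
reachable; and `a_q a_(q-1) ⋯ a_1` leads from `S` to an accepting set iff `q ∈ S`, so states are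
distinguishable. Any minimal DFA of the language is isomorphic to this one, both being isomorphic
to the Myhill–Nerode automaton, and simple paths transfer along isomorphisms.
-/

open Function

section

variable {α σ τ : Type*}

theorem DFAHasSimplePath.succ_le_card [Fintype σ] {A : DFA α σ} {m : ℕ}
    (h : DFAHasSimplePath A m) : m + 1 ≤ Fintype.card σ := by
  obtain ⟨qs, -, hinj, -⟩ := h
  simpa using Fintype.card_le_of_injective qs hinj

theorem dfaDepth_eq_card_sub_one [Fintype σ] {A : DFA α σ}
    (h : DFAHasSimplePath A (Fintype.card σ - 1)) : dfaDepth A = Fintype.card σ - 1 := by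
  have hle : ∀ m ∈ {m | DFAHasSimplePath A m}, m ≤ Fintype.card σ - 1 := fun m hm =>
    Nat.le_sub_one_of_lt (DFAHasSimplePath.succ_le_card hm)
  exact le_antisymm (csSup_le ⟨_, h⟩ hle) (le_csSup ⟨_, hle⟩ h)

theorem DFAHasSimplePath.map {A : DFA α σ} {B : DFA α τ} {f : σ → τ} (hf : Injective f)
    (hstep : ∀ q a, f (A.step q a) = B.step (f q) a) {m : ℕ} (h : DFAHasSimplePath A m) :
    DFAHasSimplePath B m := by
  obtain ⟨qs, as, hinj, hqs⟩ := h
  exact ⟨f ∘ qs, as, hf.comp hinj, fun i => by simp only [comp_apply, ← hqs i, hstep]⟩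

theorem dfaDepth_congr {A : DFA α σ} {B : DFA α τ} (e : σ ≃ τ)
    (hstep : ∀ q a, e (A.step q a) = B.step (e q) a) : dfaDepth A = dfaDepth B := by
  have hstep_symm : ∀ q a, e.symm (B.step q a) = A.step (e.symm q) a := fun q a =>
    e.symm_apply_eq.2 (by rw [hstep, e.apply_symm_apply])
  unfold dfaDepth
  congr 1
  ext m
  exact ⟨DFAHasSimplePath.map e.injective hstep, DFAHasSimplePath.map e.symm.injective hstep_symm⟩

theorem DFA.eval_surjective_of_simplePath [Fintype σ] {A : DFA α σ} {m : ℕ}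
    {qs : Fin (m + 1) → σ} {as : Fin m → α} (hstart : qs 0 = A.start) (hinj : Injective qs)
    (hstep : ∀ i : Fin m, A.step (qs i.castSucc) (as i) = qs i.succ)
    (hcard : m + 1 = Fintype.card σ) : Surjective A.eval := by
  have hreach : ∀ i, ∃ w, A.eval w = qs i := by
    refine Fin.induction ⟨[], hstart.symm⟩ fun i ⟨w, hw⟩ => ⟨w ++ [as i], ?_⟩
    rw [DFA.eval_append_singleton, hw, hstep]
  intro q
  obtain ⟨i, rfl⟩ := ((Fintype.bijective_iff_injective_and_card qs).2 ⟨hinj, by simp [hcard]⟩).2 q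
  exact hreach i

theorem DFA.acceptsFrom_step (A : DFA α σ) (q : σ) (a : α) :
    A.acceptsFrom (A.step q a) = (A.acceptsFrom q).leftQuotient [a] :=
  rfl

end

namespace IsMinimalDFA

variable {α σ : Type*} {A : DFA α σ}

noncomputable def equivToDFA (hA : IsMinimalDFA A) : σ ≃ Set.range A.accepts.leftQuotient :=
  Equiv.ofBijective
    (fun q => ⟨A.acceptsFrom q, by
      obtain ⟨w, rfl⟩ := hA.1 q
      exact ⟨w, Language.leftQuotient_accepts_apply A w⟩⟩)
    ⟨fun p q h => hA.2 p q fun w => Set.ext_iff.1 (congrArg Subtype.val h) w,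
      fun ⟨_, w, hw⟩ => ⟨A.eval w, Subtype.ext (hw ▸ Language.leftQuotient_accepts_apply A w).symm⟩⟩

theorem dfaDepth_eq_toDFA (hA : IsMinimalDFA A) : dfaDepth A = dfaDepth A.accepts.toDFA :=
  dfaDepth_congr hA.equivToDFA fun q a => Subtype.ext (A.acceptsFrom_step q a)

end IsMinimalDFA

namespace Ak

variable {k : ℕ}

theorem mem_stepSet {S : Set (Fin (k + 1))} {a p : Fin (k + 1)} :
    p ∈ (Ak k).stepSet S a ↔ (p ∈ S ∧ a < p) ∨ (a ∈ S ∧ p < a) := by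
  simp only [NFA.mem_stepSet, Ak]
  constructor
  · rintro ⟨t, ht, hp⟩
    split_ifs at hp with h1 h2
    · exact Or.inl ⟨hp ▸ ht, hp ▸ h1⟩
    · exact Or.inr ⟨h2.1 ▸ ht, h2.1 ▸ hp⟩
    · exact hp.elim
  · rintro (⟨hp, hap⟩ | ⟨ha, hpa⟩)
    · exact ⟨p, hp, by simp [hap]⟩
    · exact ⟨a, ha, by simp [hpa, (Fin.zero_le p).trans_lt hpa]⟩

def bitSet (k v : ℕ) : Set (Fin (k + 1)) := {q | v.testBit q}

theorem bitSet_injOn : Set.InjOn (bitSet k) (Set.Iio (2 ^ (k + 1))) := by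
  intro u hu v hv huv
  refine Nat.eq_of_testBit_eq fun i => ?_
  by_cases hi : i < k + 1
  · simpa [bitSet] using Set.ext_iff.1 huv ⟨i, hi⟩
  · have hle : 2 ^ (k + 1) ≤ 2 ^ i := Nat.pow_le_pow_right two_pos (not_lt.1 hi)
    rw [Nat.testBit_lt_two_pow ((Set.mem_Iio.1 hu).trans_le hle),
      Nat.testBit_lt_two_pow ((Set.mem_Iio.1 hv).trans_le hle)]

theorem bitSet_two_pow_sub_one : bitSet k (2 ^ (k + 1) - 1) = Set.univ := by
  ext q
  simp [bitSet, Fin.is_le q]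

theorem stepSet_bitSet {j : ℕ} (hj : j < k + 1) (m : ℕ) :
    (Ak k).stepSet (bitSet k (2 ^ j * (2 * m + 1))) ⟨j, hj⟩ =
      bitSet k (2 ^ j * (2 * m + 1) - 1) := by
  have hv : 2 ^ j * (2 * m + 1) = 2 ^ (j + 1) * m + 2 ^ j := by ring
  have hv' : 2 ^ j * (2 * m + 1) - 1 = 2 ^ (j + 1) * m + (2 ^ j - 1) := by
    rw [hv]; have := Nat.one_le_two_pow (n := j); omega
  have hlt : 2 ^ j < 2 ^ (j + 1) := Nat.pow_lt_pow_right one_lt_two (Nat.lt_succ_self j)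
  ext p
  simp only [mem_stepSet, bitSet, Set.mem_ofPred_eq, Fin.lt_def]
  rw [hv', hv, Nat.testBit_two_pow_mul_add m hlt, Nat.testBit_two_pow_mul_add m hlt,
    Nat.testBit_two_pow_mul_add m (Nat.sub_lt_of_lt hlt)]
  rcases lt_trichotomy (p : ℕ) j with h | h | h
  · simp [h, Nat.lt_succ_of_lt h]
  · simp [h]
  · simp [h, Nat.not_lt_of_gt h]

theorem exists_step_bitSet_pred {v : ℕ} (hv0 : 0 < v) (hv : v < 2 ^ (k + 1)) :
    ∃ a, (Ak k).toDFA.step (bitSet k v) a = bitSet k (v - 1) := by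
  obtain ⟨j, _, ⟨m, rfl⟩, rfl⟩ := Nat.exists_eq_two_pow_mul_odd hv0.ne'
  have hj : j < k + 1 :=
    (Nat.pow_lt_pow_iff_right one_lt_two).1 ((Nat.le_mul_of_pos_right _ (by omega)).trans_lt hv)
  exact ⟨⟨j, hj⟩, stepSet_bitSet hj m⟩

theorem exists_simplePath_from_univ :
    ∃ (qs : Fin (2 ^ (k + 1) - 1 + 1) → Set (Fin (k + 1)))
      (as : Fin (2 ^ (k + 1) - 1) → Fin (k + 1)), qs 0 = Set.univ ∧ Injective qs ∧
        ∀ i, (Ak k).toDFA.step (qs i.castSucc) (as i) = qs i.succ := by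
  have hpos := Nat.one_le_two_pow (n := k + 1)
  choose as has using fun i : Fin (2 ^ (k + 1) - 1) =>
    exists_step_bitSet_pred (k := k) (v := 2 ^ (k + 1) - 1 - i) (by omega) (by omega)
  refine ⟨fun i => bitSet k (2 ^ (k + 1) - 1 - i), as, by simpa using bitSet_two_pow_sub_one,
    fun i j h => Fin.ext ?_, fun i => ?_⟩
  · have := bitSet_injOn (Set.mem_Iio.2 (by omega)) (Set.mem_Iio.2 (by omega)) h
    omega
  · simp only [Fin.val_castSucc, Fin.val_succ, has i]
    congr 1

theorem castSucc_mem_stepSet_succ_iff {S : Set (Fin (k + 1))} {i : Fin k} :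
    i.castSucc ∈ (Ak k).stepSet S i.succ ↔ i.succ ∈ S := by
  simp [mem_stepSet, (Fin.castSucc_lt_succ (i := i)).not_gt]

theorem exists_word_accept_iff_mem (q : Fin (k + 1)) :
    ∃ w, ∀ S, (Ak k).toDFA.evalFrom S w ∈ (Ak k).toDFA.accept ↔ q ∈ S := by
  induction q using Fin.induction with
  | zero => exact ⟨[], fun S => by simp [NFA.toDFA, Ak]⟩
  | succ i ih =>
    obtain ⟨w, hw⟩ := ih
    exact ⟨i.succ :: w, fun S => (hw _).trans castSucc_mem_stepSet_succ_iff⟩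

theorem isMinimalDFA_toDFA : IsMinimalDFA (Ak k).toDFA := by
  obtain ⟨qs, as, hstart, hinj, hstep⟩ := exists_simplePath_from_univ (k := k)
  refine ⟨DFA.eval_surjective_of_simplePath hstart hinj hstep
    (by simp [Nat.sub_add_cancel Nat.one_le_two_pow]), fun S T h => ?_⟩
  ext q
  obtain ⟨w, hw⟩ := exists_word_accept_iff_mem q
  rw [← hw S, ← hw T]
  exact h w

theorem dfaDepth_toDFA : dfaDepth (Ak k).toDFA = 2 ^ (k + 1) - 1 := by
  obtain ⟨qs, as, -, hinj, hstep⟩ := exists_simplePath_from_univ (k := k)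
  have hcard : Fintype.card (Set (Fin (k + 1))) = 2 ^ (k + 1) := by simp
  have hdepth := dfaDepth_eq_card_sub_one (A := (Ak k).toDFA)
    (by rw [hcard]; exact ⟨qs, as, hinj, hstep⟩)
  rwa [hcard] at hdepth

end Ak

theorem stmt10 (k : ℕ) :
    (∃ (τ : Type) (_ : Fintype τ) (D : DFA (Fin (k + 1)) τ),
      IsMinimalDFA D ∧ D.accepts = (Ak k).accepts ∧ dfaDepth D = 2 ^ (k + 1) - 1) ∧
    (∀ (τ : Type) (D : DFA (Fin (k + 1)) τ),
      IsMinimalDFA D → D.accepts = (Ak k).accepts → dfaDepth D = 2 ^ (k + 1) - 1) := by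
  have hmin : IsMinimalDFA (Ak k).toDFA := Ak.isMinimalDFA_toDFA
  have hdepth : dfaDepth (Ak k).toDFA = 2 ^ (k + 1) - 1 := Ak.dfaDepth_toDFA
  refine ⟨⟨Set (Fin (k + 1)), inferInstance, (Ak k).toDFA, hmin, (Ak k).toDFA_correct, hdepth⟩, ?_⟩
  intro τ D hD hDL
  rw [hD.dfaDepth_eq_toDFA, hDL, ← (Ak k).toDFA_correct, ← hmin.dfaDepth_eq_toDFA, hdepth]
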